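/- Let $U\subset\mathbb{R}^n$ be open and convex and $f:U\to\mathbb{R}$ be $C^2$. If for every $x\in U$, $\nabla f(x)\ne 0$ and $v^T D^2f(x)v<0$ for every $v\ne 0$ with $\nabla f(x)\cdot v=0$, then $f$ is strictly quasi-concave. -/

import Mathlib

/-!
Restrict `f` to the segment from `x` to `y`, `g s = f (x + s • (y - x))`. If
`g t ≤ min (g 0) (g 1)` for some interior `t`, then `g` attains its minimum on `[0, 1]` at an
interior point `c`. There `g' c = ∇f · (y - x) = 0`, so the hypothesis on the Hessian gives
`g'' c < 0`, which is incompatible with the second-order necessary condition `g'' c ≥ 0`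
at a local minimum.
-/

open Set Filter Topology

theorem IsLocalMin.deriv_deriv_nonneg {g : ℝ → ℝ} {c : ℝ} (hmin : IsLocalMin g c)
    (hc : ContinuousAt g c) : 0 ≤ deriv (deriv g) c := by
  by_contra! hneg
  -- `c` would also be a local maximum, so `g` is locally constant and `g'' c = 0`.
  have hmax := isLocalMax_of_deriv_deriv_neg hneg hmin.deriv_eq_zero hc
  have hconst : g =ᶠ[𝓝 c] fun _ => g c :=
    (hmin.and hmax).mono fun _ h => le_antisymm h.2 h.1
  have hderiv : deriv g =ᶠ[𝓝 c] fun _ => 0 :=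
    hconst.eventuallyEq_nhds.mono fun _ h => h.deriv_eq.trans (deriv_const _ _)
  rw [hderiv.deriv_eq, deriv_const] at hneg
  exact hneg.false

theorem min_lt_of_forall_not_isLocalMin {g : ℝ → ℝ} {a b t : ℝ}
    (hg : ContinuousOn g (Icc a b)) (hloc : ∀ c ∈ Ioo a b, ¬ IsLocalMin g c)
    (ht : t ∈ Ioo a b) : min (g a) (g b) < g t := by
  have not_isMinOn : ∀ c ∈ Ioo a b, ¬ IsMinOn g (Icc a b) c := fun c hc hmin =>
    hloc c hc (hmin.isLocalMin (Icc_mem_nhds hc.1 hc.2))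
  by_contra! hle
  obtain ⟨c, hc, hmin⟩ := isCompact_Icc.exists_isMinOn
    (nonempty_Icc.mpr (ht.1.trans ht.2).le) hg
  have hc_end : c = a ∨ c = b := by
    by_contra! hne
    exact not_isMinOn c ⟨lt_of_le_of_ne hc.1 hne.1.symm, lt_of_le_of_ne hc.2 hne.2⟩ hmin
  have hgc : min (g a) (g b) ≤ g c := by
    rcases hc_end with rfl | rfl
    exacts [min_le_left _ _, min_le_right _ _]
  exact not_isMinOn t ht fun s hs => (hle.trans hgc).trans (hmin hs)

section Line

variable {E F : Type*} [NormedAddCommGroup E] [NormedSpace ℝ E]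
  [NormedAddCommGroup F] [NormedSpace ℝ F] {f : E → F} {U : Set E} {x v : E} {s : ℝ}

theorem HasFDerivAt.hasDerivAt_comp_add_smul {f' : E →L[ℝ] F}
    (hf : HasFDerivAt f f' (x + s • v)) : HasDerivAt (fun s => f (x + s • v)) (f' v) s := by
  have hline : HasDerivAt (fun s : ℝ => x + s • v) v s := by
    simpa using ((hasDerivAt_id s).smul_const v).const_add x
  exact hf.comp_hasDerivAt s hline

theorem deriv_comp_add_smul_eventuallyEq (hU : IsOpen U) (hf : DifferentiableOn ℝ f U)
    (hs : x + s • v ∈ U) :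
    deriv (fun s => f (x + s • v)) =ᶠ[𝓝 s] fun s => fderiv ℝ f (x + s • v) v := by
  have hcont : Continuous fun s : ℝ => x + s • v := by fun_prop
  filter_upwards [hcont.continuousAt.preimage_mem_nhds (hU.mem_nhds hs)] with r hr
  exact ((hf.differentiableAt (hU.mem_nhds hr)).hasFDerivAt.hasDerivAt_comp_add_smul).deriv

theorem deriv_deriv_comp_add_smul (hU : IsOpen U) (hf : ContDiffOn ℝ 2 f U)
    (hs : x + s • v ∈ U) :
    deriv (deriv fun s => f (x + s • v)) s = fderiv ℝ (fderiv ℝ f) (x + s • v) v v := by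
  rw [(deriv_comp_add_smul_eventuallyEq hU (hf.differentiableOn two_ne_zero) hs).deriv_eq]
  have hf' : DifferentiableOn ℝ (fderiv ℝ f) U :=
    (hf.fderiv_of_isOpen (m := 1) hU (by norm_num)).differentiableOn one_ne_zero
  have hD := (hf' _ hs).differentiableAt (hU.mem_nhds hs) |>.hasFDerivAt
  exact (hD.hasDerivAt_comp_add_smul.clm_apply (hasDerivAt_const s v)).deriv.trans (by simp)

end Line

theorem stmt_5_general {n : ℕ} (U : Set (EuclideanSpace ℝ (Fin n)))
    (hU : IsOpen U) (hUc : Convex ℝ U)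
    (f : EuclideanSpace ℝ (Fin n) → ℝ) (hf : ContDiffOn ℝ 2 f U)
    (hsec : ∀ x ∈ U, ∀ v : EuclideanSpace ℝ (Fin n), v ≠ 0 →
        fderiv ℝ f x v = 0 → fderiv ℝ (fderiv ℝ f) x v v < 0) :
    ∀ x ∈ U, ∀ y ∈ U, x ≠ y → ∀ t ∈ Ioo (0:ℝ) 1,
      min (f x) (f y) < f ((1 - t) • x + t • y) := by
  intro x hx y hy hxy t ht
  set g : ℝ → ℝ := fun s => f (x + s • (y - x))
  have hseg : ∀ s ∈ Icc (0:ℝ) 1, x + s • (y - x) ∈ U :=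
    fun s hs => hUc.add_smul_sub_mem hx hy hs
  have hgd : ∀ s ∈ Icc (0:ℝ) 1, HasDerivAt g (fderiv ℝ f (x + s • (y - x)) (y - x)) s :=
    fun s hs => ((hf.differentiableOn two_ne_zero _ (hseg s hs)).differentiableAt
      (hU.mem_nhds (hseg s hs))).hasFDerivAt.hasDerivAt_comp_add_smul
  have hloc : ∀ c ∈ Ioo (0:ℝ) 1, ¬ IsLocalMin g c := by
    intro c hc hmin
    have hcI := Ioo_subset_Icc_self hc
    have hcrit : fderiv ℝ f (x + c • (y - x)) (y - x) = 0 :=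
      (hgd c hcI).deriv ▸ hmin.deriv_eq_zero
    have hneg := hsec _ (hseg c hcI) _ (sub_ne_zero.mpr hxy.symm) hcrit
    have hnonneg := hmin.deriv_deriv_nonneg (hgd c hcI).continuousAt
    rw [deriv_deriv_comp_add_smul hU hf (hseg c hcI)] at hnonneg
    exact hneg.not_ge hnonneg
  have hmin_lt := min_lt_of_forall_not_isLocalMin
    (fun s hs => (hgd s hs).continuousAt.continuousWithinAt) hloc ht
  have hgt : f ((1 - t) • x + t • y) = g t := by simp only [g]; congr 1; module
  simpa [g, hgt] using hmin_lt

theorem stmt_5 {n : ℕ} (U : Set (EuclideanSpace ℝ (Fin n)))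
    (hU : IsOpen U) (hUc : Convex ℝ U)
    (f : EuclideanSpace ℝ (Fin n) → ℝ) (hf : ContDiffOn ℝ 2 f U)
    (hDf : ∀ x ∈ U, fderiv ℝ f x ≠ 0)
    (hsec : ∀ x ∈ U, ∀ v : EuclideanSpace ℝ (Fin n), v ≠ 0 →
        fderiv ℝ f x v = 0 → fderiv ℝ (fderiv ℝ f) x v v < 0) :
    ∀ x ∈ U, ∀ y ∈ U, x ≠ y → ∀ t ∈ Ioo (0:ℝ) 1,
      min (f x) (f y) < f ((1 - t) • x + t • y) :=
  stmt_5_general U hU hUc f hf hsec
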